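/- For every tuple C ∈ Π = ∏_{i=1}^ℓ 𝔽_q^{m_i×n_i}, the sum-rank weight satisfies wt_SR(C) ≤ wt_MC(C); consequently, for every code 𝒞 ⊆ Π with at least two elements, d_SR(𝒞) ≤ d_MC(𝒞), and if, assuming n_i ≤ m_i for all i and m_1 ≥ … ≥ m_ℓ, the code 𝒞 is MSRD, then 𝒞 is MMCD. -/
import Mathlib


open Finset

/-- The space `∏_{i=1}^ℓ 𝔽_q^{m_i × n_i}` of `ℓ`-tuples of matrices over `F`. -/
abbrev MCSpace (F : Type*) {ℓ : ℕ} (m n : Fin ℓ → ℕ) : Type _ :=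
  (i : Fin ℓ) → Matrix (Fin (m i)) (Fin (n i)) F

section Defs

variable {F : Type*} [Field F] [Fintype F] {ℓ : ℕ} {m n : Fin ℓ → ℕ}

/-- `(X, Y)` is a multi-cover of the tuple of matrices `C`: every nonzero entry of `C i`
lies in a row indexed by `X i` or a column indexed by `Y i`. -/
def IsMultiCover (X : (i : Fin ℓ) → Finset (Fin (m i))) (Y : (i : Fin ℓ) → Finset (Fin (n i)))
    (C : MCSpace F m n) : Prop :=
  ∀ i a b, C i a b ≠ 0 → a ∈ X i ∨ b ∈ Y i

/-- The size `Σ_i (|X_i| + |Y_i|)` of a multi-cover. -/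
def mcSize {ℓ : ℕ} {m n : Fin ℓ → ℕ} (X : (i : Fin ℓ) → Finset (Fin (m i)))
    (Y : (i : Fin ℓ) → Finset (Fin (n i))) : ℕ :=
  ∑ i, ((X i).card + (Y i).card)

/-- The multi-cover weight: the minimum size of a multi-cover of `C`. -/
noncomputable def wtMC (C : MCSpace F m n) : ℕ :=
  sInf {r | ∃ X Y, IsMultiCover X Y C ∧ mcSize X Y = r}

/-- The minimum multi-cover distance of a code. -/
noncomputable def dMC (𝒞 : Set (MCSpace F m n)) : ℕ :=
  sInf {r | ∃ C ∈ 𝒞, ∃ D ∈ 𝒞, C ≠ D ∧ wtMC (C - D) = r}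

/-- The column Hamming weight: the number of nonzero columns among the matrices `C i`. -/
noncomputable def wtHC (C : MCSpace F m n) : ℕ :=
  ∑ i, Set.ncard {b : Fin (n i) | ∃ a, C i a b ≠ 0}

/-- The minimum column Hamming distance of a code. -/
noncomputable def dHC (𝒞 : Set (MCSpace F m n)) : ℕ :=
  sInf {r | ∃ C ∈ 𝒞, ∃ D ∈ 𝒞, C ≠ D ∧ wtHC (C - D) = r}

/-- The projection `π_X` removing, in each block `i`, the rows indexed by `X i` and the
columns indexed by `Y i` (the remaining rows and columns are re-indexed in order). -/
noncomputable def projMC (X : (i : Fin ℓ) → Finset (Fin (m i)))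
    (Y : (i : Fin ℓ) → Finset (Fin (n i))) (C : MCSpace F m n) :
    MCSpace F (fun i => m i - (X i).card) (fun i => n i - (Y i).card) :=
  fun i a b =>
    C i ((X i)ᶜ.orderIsoOfFin (by simp [Finset.card_compl]) a)
        ((Y i)ᶜ.orderIsoOfFin (by simp [Finset.card_compl]) b)

/-- The projection `π_X` as a linear map. -/
noncomputable def projMCLin (X : (i : Fin ℓ) → Finset (Fin (m i)))
    (Y : (i : Fin ℓ) → Finset (Fin (n i))) :
    MCSpace F m n →ₗ[F] MCSpace F (fun i => m i - (X i).card) (fun i => n i - (Y i).card) where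
  toFun := projMC X Y
  map_add' _ _ := rfl
  map_smul' _ _ := rfl

/-- The punctured code `𝒞_X = π_X(𝒞)`. -/
noncomputable def punctureMC (𝒞 : Submodule F (MCSpace F m n))
    (X : (i : Fin ℓ) → Finset (Fin (m i))) (Y : (i : Fin ℓ) → Finset (Fin (n i))) :
    Submodule F (MCSpace F (fun i => m i - (X i).card) (fun i => n i - (Y i).card)) :=
  Submodule.map (projMCLin X Y) 𝒞

/-- The subspace of tuples vanishing on all entries covered by `(X, Y)`. -/
def zeroOnMC (X : (i : Fin ℓ) → Finset (Fin (m i))) (Y : (i : Fin ℓ) → Finset (Fin (n i))) :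
    Submodule F (MCSpace F m n) where
  carrier := {C | ∀ i a b, (a ∈ X i ∨ b ∈ Y i) → C i a b = 0}
  zero_mem' := by intro i a b _; rfl
  add_mem' := by
    intro C D hC hD i a b hab
    show C i a b + D i a b = 0
    rw [hC i a b hab, hD i a b hab, add_zero]
  smul_mem' := by
    intro c C hC i a b hab
    show c * C i a b = 0
    rw [hC i a b hab, mul_zero]

/-- The shortened code `𝒞^X`. -/
noncomputable def shortenMC (𝒞 : Submodule F (MCSpace F m n))
    (X : (i : Fin ℓ) → Finset (Fin (m i))) (Y : (i : Fin ℓ) → Finset (Fin (n i))) :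
    Submodule F (MCSpace F (fun i => m i - (X i).card) (fun i => n i - (Y i).card)) :=
  Submodule.map (projMCLin X Y) (𝒞 ⊓ zeroOnMC X Y)

/-- The standard (trace / entrywise) inner product on `MCSpace F m n`. -/
def innerMC (C D : MCSpace F m n) : F := ∑ i, ∑ a, ∑ b, C i a b * D i a b

/-- The dual code with respect to the entrywise inner product. -/
def dualMC (𝒞 : Submodule F (MCSpace F m n)) : Submodule F (MCSpace F m n) where
  carrier := {D | ∀ C ∈ 𝒞, innerMC C D = 0}
  zero_mem' := by intro C _; simp [innerMC]
  add_mem' := by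
    intro D E hD hE C hC
    have h1 := hD C hC
    have h2 := hE C hC
    simp only [innerMC] at h1 h2 ⊢
    simp only [Pi.add_apply, Matrix.add_apply, mul_add, Finset.sum_add_distrib, h1, h2, add_zero]
  smul_mem' := by
    intro c D hD C hC
    have h1 := hD C hC
    simp only [innerMC] at h1 ⊢
    simp only [Pi.smul_apply, Matrix.smul_apply, smul_eq_mul, mul_left_comm, ← Finset.mul_sum,
      h1, mul_zero]

/-- `𝒞` is a maximum multi-cover distance (MMCD) code: it attains the Singleton bound,
where `j` and `δ` are the (unique) integers with `d_MC(𝒞) - 1 = Σ_{i<j} n_i + δ`,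
`0 ≤ δ ≤ n_j - 1`. -/
noncomputable def IsMMCD (𝒞 : Set (MCSpace F m n)) : Prop :=
  ∃ (j : Fin ℓ) (δ : ℕ), δ ≤ n j - 1 ∧
    dMC 𝒞 - 1 = (∑ i ∈ Finset.Iio j, n i) + δ ∧
    𝒞.ncard = (Fintype.card F) ^ ((∑ i ∈ Finset.Ici j, m i * n i) - m j * δ)

/-- The sum-rank weight. -/
noncomputable def wtSR (C : MCSpace F m n) : ℕ := ∑ i, (C i).rank

/-- The minimum sum-rank distance of a code. -/
noncomputable def dSR (𝒞 : Set (MCSpace F m n)) : ℕ :=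
  sInf {r | ∃ C ∈ 𝒞, ∃ D ∈ 𝒞, C ≠ D ∧ wtSR (C - D) = r}

/-- The cover weight of a single matrix. -/
noncomputable def coverWt {m n : ℕ} (C : Matrix (Fin m) (Fin n) F) : ℕ :=
  sInf {r | ∃ (X : Finset (Fin m)) (Y : Finset (Fin n)),
    (∀ a b, C a b ≠ 0 → a ∈ X ∨ b ∈ Y) ∧ X.card + Y.card = r}

end Defs

/-- `S_r^{m,n}`: the number of `m × n` matrices over `F` of cover weight exactly `r`. -/
noncomputable def Scount (F : Type*) [Field F] [Fintype F] (m n r : ℕ) : ℕ :=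
  Set.ncard {C : Matrix (Fin m) (Fin n) F | coverWt C = r}


section Helpers

open Finset

private lemma matrixRank_add_le {F : Type*} [Field F] {m n : ℕ}
    (A B : Matrix (Fin m) (Fin n) F) : (A + B).rank ≤ A.rank + B.rank := by
  classical
  have h : LinearMap.range (A + B).mulVecLin ≤
      LinearMap.range A.mulVecLin ⊔ LinearMap.range B.mulVecLin := by
    rintro _ ⟨x, rfl⟩
    rw [Matrix.mulVecLin_add]
    exact Submodule.mem_sup.2 ⟨_, ⟨x, rfl⟩, _, ⟨x, rfl⟩, rfl⟩
  calc (A + B).rank ≤ Module.finrank F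
        ↥(LinearMap.range A.mulVecLin ⊔ LinearMap.range B.mulVecLin) :=
        Submodule.finrank_mono h
    _ ≤ A.rank + B.rank := Submodule.finrank_add_le_finrank_add_finrank _ _

private lemma rank_le_cover' {F : Type*} [Field F] {m n : ℕ} (M : Matrix (Fin m) (Fin n) F)
    (X : Finset (Fin m)) (Y : Finset (Fin n))
    (h : ∀ a b, M a b ≠ 0 → a ∈ X ∨ b ∈ Y) : M.rank ≤ X.card + Y.card := by
  classical
  set dX : Matrix (Fin m) (Fin m) F := Matrix.diagonal (fun a => if a ∈ X then 1 else 0) with hdX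
  set dY : Matrix (Fin n) (Fin n) F := Matrix.diagonal (fun b => if b ∈ Y then 1 else 0) with hdY
  set A : Matrix (Fin m) (Fin n) F := dX * M with hA
  set B : Matrix (Fin m) (Fin n) F := M - A with hB
  have hAB : M = A + B := by rw [hB]; abel
  have hBe : ∀ a b, B a b = M a b - (if a ∈ X then 1 else 0) * M a b := by
    intro a b
    simp [hB, hA, hdX, Matrix.diagonal_mul, Matrix.sub_apply]
  have hBC : ∀ a b, B a b ≠ 0 → b ∈ Y := by
    intro a b hb
    by_cases hx : a ∈ X
    · rw [hBe, if_pos hx, one_mul, sub_self] at hb; exact absurd rfl hb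
    · rw [hBe, if_neg hx, zero_mul, sub_zero] at hb
      exact (h a b hb).resolve_left hx
  have hBY : B = B * dY := by
    ext a b
    rw [hdY, Matrix.mul_diagonal]
    by_cases hy : b ∈ Y
    · rw [if_pos hy, mul_one]
    · rw [if_neg hy, mul_zero]
      by_contra hb
      exact hy (hBC a b hb)
  have hrdX : dX.rank = X.card := by
    rw [hdX, Matrix.rank_diagonal, ← Fintype.card_coe X]
    apply Fintype.card_congr
    apply Equiv.subtypeEquivRight
    intro a
    by_cases hx : a ∈ X <;> simp [hx]
  have hrdY : dY.rank = Y.card := by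
    rw [hdY, Matrix.rank_diagonal, ← Fintype.card_coe Y]
    apply Fintype.card_congr
    apply Equiv.subtypeEquivRight
    intro a
    by_cases hx : a ∈ Y <;> simp [hx]
  have h1 : A.rank ≤ X.card := by
    rw [hA, ← hrdX]; exact Matrix.rank_mul_le_left dX M
  have h2 : B.rank ≤ Y.card := by
    rw [hBY, ← hrdY]; exact Matrix.rank_mul_le_right B dY
  calc M.rank = (A + B).rank := by rw [← hAB]
    _ ≤ A.rank + B.rank := matrixRank_add_le A B
    _ ≤ X.card + Y.card := Nat.add_le_add h1 h2

private lemma decompose' {ℓ : ℕ} (n : Fin ℓ → ℕ) (t : ℕ) (ht : t < ∑ i, n i) :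
    ∃ (j : Fin ℓ) (δ : ℕ), δ < n j ∧ t = (∑ i ∈ Finset.Iio j, n i) + δ := by
  classical
  cases ℓ with
  | zero => simp at ht
  | succ k =>
    set S : Finset (Fin (k + 1)) := univ.filter (fun j => t < ∑ i ∈ Iic j, n i) with hS
    have hSne : S.Nonempty := by
      refine ⟨Fin.last k, ?_⟩
      rw [hS, mem_filter]
      refine ⟨mem_univ _, ?_⟩
      have : Iic (Fin.last k) = univ := by ext i; simp [Fin.le_last]
      rwa [this]
    set j := S.min' hSne with hj
    have hjS : j ∈ S := S.min'_mem hSne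
    have hjlt : t < ∑ i ∈ Iic j, n i := by
      rw [hS, mem_filter] at hjS; exact hjS.2
    have hle : ∑ i ∈ Iio j, n i ≤ t := by
      by_contra hc
      push_neg at hc
      have hj0 : (j : ℕ) ≠ 0 := by
        intro h0
        have he : Iio j = ∅ := by
          ext i; simp only [mem_Iio, Fin.lt_def, h0, Finset.notMem_empty, iff_false]; omega
        rw [he] at hc
        simp at hc
      set j' : Fin (k + 1) := ⟨(j : ℕ) - 1, by omega⟩ with hj'
      have hIic : Iic j' = Iio j := by
        ext i
        simp only [mem_Iic, mem_Iio, Fin.le_def, Fin.lt_def, hj']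
        omega
      have hj'S : j' ∈ S := by
        rw [hS, mem_filter]
        exact ⟨mem_univ _, by rwa [hIic]⟩
      have hmin := S.min'_le j' hj'S
      rw [← hj] at hmin
      have : (j : ℕ) ≤ (j : ℕ) - 1 := hmin
      omega
    refine ⟨j, t - ∑ i ∈ Iio j, n i, ?_, by omega⟩
    have hsplit : ∑ i ∈ Iic j, n i = (∑ i ∈ Iio j, n i) + n j := by
      rw [← Finset.Iio_insert, Finset.sum_insert (by simp), Nat.add_comm]
    omega

private lemma filter_val_lt_card (N δ : ℕ) (h : δ ≤ N) :
    (univ.filter (fun b : Fin N => (b : ℕ) < δ)).card = δ := by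
  have : univ.filter (fun b : Fin N => (b : ℕ) < δ)
      = (univ : Finset (Fin δ)).map (Fin.castLEEmb h) := by
    ext b
    simp only [mem_filter, mem_univ, true_and, Finset.mem_map]
    constructor
    · intro hb; exact ⟨⟨b, hb⟩, by simp [Fin.castLEEmb, Fin.castLE]⟩
    · rintro ⟨a, -, rfl⟩; simpa using a.isLt
  rw [this, Finset.card_map, Finset.card_univ, Fintype.card_fin]

private lemma card_target {ℓ : ℕ} (m n : Fin ℓ → ℕ) (F : Type*) [Field F] [Fintype F]
    (Y : (i : Fin ℓ) → Finset (Fin (n i))) :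
    Fintype.card ((i : Fin ℓ) → Fin (m i) → {b : Fin (n i) // b ∉ Y i} → F)
      = (Fintype.card F) ^ (∑ i, m i * (n i - (Y i).card)) := by
  classical
  rw [Fintype.card_pi, ← Finset.prod_pow_eq_pow_sum]
  apply Finset.prod_congr rfl
  intro i _
  rw [Fintype.card_fun, Fintype.card_fun]
  have : Fintype.card {b : Fin (n i) // b ∉ Y i} = n i - (Y i).card := by
    rw [Fintype.card_subtype_compl]
    congr 1
    · exact Fintype.card_fin _
    · rw [Fintype.card_coe]
  rw [this, ← pow_mul, Nat.mul_comm, Fintype.card_fin]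

private lemma univ_filter_lt {ℓ : ℕ} (j : Fin ℓ) :
    (univ : Finset (Fin ℓ)).filter (fun i => i < j) = Iio j := by
  ext i; simp

private lemma univ_filter_not_lt {ℓ : ℕ} (j : Fin ℓ) :
    (univ : Finset (Fin ℓ)).filter (fun i => ¬ i < j) = Ici j := by
  ext i; simp [not_lt]

private lemma sum_Iio_add_sum_Ici {ℓ : ℕ} (j : Fin ℓ) (f : Fin ℓ → ℕ) :
    (∑ i ∈ Iio j, f i) + (∑ i ∈ Ici j, f i) = ∑ i, f i := by
  classical
  rw [← univ_filter_lt j, ← univ_filter_not_lt j]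
  exact Finset.sum_filter_add_sum_filter_not univ _ f

private lemma sum_Iic_eq {ℓ : ℕ} (j : Fin ℓ) (f : Fin ℓ → ℕ) :
    ∑ i ∈ Iic j, f i = (∑ i ∈ Iio j, f i) + f j := by
  classical
  rw [← Finset.Iio_insert, Finset.sum_insert (by simp), Nat.add_comm]

private lemma sum_Ici_eq {ℓ : ℕ} (j : Fin ℓ) (f : Fin ℓ → ℕ) :
    ∑ i ∈ Ici j, f i = f j + ∑ i ∈ Ioi j, f i := by
  classical
  rw [← Finset.Ioi_insert, Finset.sum_insert (by simp)]

private lemma exponent_mono {ℓ : ℕ} (m n : Fin ℓ → ℕ) (j j' : Fin ℓ) (δ δ' : ℕ)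
    (hδ : δ < n j) (hδ' : δ' < n j')
    (hs : (∑ i ∈ Iio j, n i) + δ ≤ (∑ i ∈ Iio j', n i) + δ') :
    (∑ i ∈ Ici j', m i * n i) - m j' * δ' ≤ (∑ i ∈ Ici j, m i * n i) - m j * δ := by
  classical
  have hjj' : j ≤ j' := by
    by_contra hc
    push_neg at hc
    have h1 : (∑ i ∈ Iic j', n i) ≤ ∑ i ∈ Iio j, n i := by
      apply Finset.sum_le_sum_of_subset
      intro i hi
      rw [mem_Iic] at hi
      rw [mem_Iio]
      exact lt_of_le_of_lt hi hc
    have h2 := sum_Iic_eq j' n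
    omega
  have key : (∑ i ∈ Iio j, m i * n i) + m j * δ
      ≤ (∑ i ∈ Iio j', m i * n i) + m j' * δ' := by
    rcases eq_or_lt_of_le hjj' with rfl | hlt
    · have hδδ' : δ ≤ δ' := by omega
      exact Nat.add_le_add_left (Nat.mul_le_mul_left _ hδδ') _
    · have h1 : (∑ i ∈ Iic j, m i * n i) ≤ ∑ i ∈ Iio j', m i * n i := by
        apply Finset.sum_le_sum_of_subset
        intro i hi
        rw [mem_Iic] at hi
        rw [mem_Iio]
        exact lt_of_le_of_lt hi hlt
      have h2 := sum_Iic_eq j (fun i => m i * n i)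
      have h3 : m j * δ ≤ m j * n j := Nat.mul_le_mul_left _ hδ.le
      omega
  have hT := sum_Iio_add_sum_Ici j (fun i => m i * n i)
  have hT' := sum_Iio_add_sum_Ici j' (fun i => m i * n i)
  have hb1 : m j * δ ≤ ∑ i ∈ Ici j, m i * n i := by
    have h3 : m j * δ ≤ m j * n j := Nat.mul_le_mul_left _ hδ.le
    have h4 := sum_Ici_eq j (fun i => m i * n i)
    omega
  have hb2 : m j' * δ' ≤ ∑ i ∈ Ici j', m i * n i := by
    have h3 : m j' * δ' ≤ m j' * n j' := Nat.mul_le_mul_left _ hδ'.le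
    have h4 := sum_Ici_eq j' (fun i => m i * n i)
    omega
  omega

section WtMC

variable {F : Type*} [Field F] [Fintype F] {ℓ : ℕ} {m n : Fin ℓ → ℕ}

private lemma wtMC_exists (C : MCSpace F m n) :
    ∃ X Y, IsMultiCover X Y C ∧ mcSize X Y = wtMC C := by
  have hne : {r | ∃ X Y, IsMultiCover X Y C ∧ mcSize X Y = r}.Nonempty :=
    ⟨mcSize (fun _ => univ) (fun _ => ∅),
      ⟨fun _ => univ, fun _ => ∅, fun _ a _ _ => Or.inl (mem_univ a), rfl⟩⟩
  exact Nat.sInf_mem hne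

private lemma wtMC_le {X : (i : Fin ℓ) → Finset (Fin (m i))}
    {Y : (i : Fin ℓ) → Finset (Fin (n i))} {C : MCSpace F m n}
    (h : IsMultiCover X Y C) : wtMC C ≤ mcSize X Y :=
  Nat.sInf_le ⟨X, Y, h, rfl⟩

private lemma wtMC_eq_zero {C : MCSpace F m n} (h : wtMC C = 0) : C = 0 := by
  obtain ⟨X, Y, hcov, hsize⟩ := wtMC_exists C
  rw [h] at hsize
  have hc : ∀ i, (X i).card + (Y i).card = 0 := by
    intro i
    have := (Finset.sum_eq_zero_iff.1 hsize) i (mem_univ i)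
    omega
  funext i
  ext a b
  show C i a b = 0
  by_contra hab
  rcases hcov i a b hab with hx | hy
  · have := Finset.card_pos.2 ⟨a, hx⟩
    have := hc i
    omega
  · have := Finset.card_pos.2 ⟨b, hy⟩
    have := hc i
    omega

private lemma wtSR_le_mcSize {X : (i : Fin ℓ) → Finset (Fin (m i))}
    {Y : (i : Fin ℓ) → Finset (Fin (n i))} {C : MCSpace F m n}
    (h : IsMultiCover X Y C) : wtSR C ≤ mcSize X Y :=
  Finset.sum_le_sum fun i _ => rank_le_cover' (C i) (X i) (Y i) (h i)

end WtMC

end Helpers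

/-- the sum-rank weight is bounded by the multi-cover weight; consequently
the minimum sum-rank distance is bounded by the minimum multi-cover distance, and every
MSRD code is MMCD. -/
theorem sumRank_le_multiCover {F : Type*} [Field F] [Fintype F] {ℓ : ℕ} {m n : Fin ℓ → ℕ}
    (hm : ∀ i, 0 < m i) (hn : ∀ i, 0 < n i) (hnm : ∀ i, n i ≤ m i)
    (hmono : ∀ i j : Fin ℓ, i ≤ j → m j ≤ m i) :
    (∀ C : MCSpace F m n, wtSR C ≤ wtMC C) ∧
    (∀ 𝒞 : Set (MCSpace F m n), 1 < 𝒞.ncard →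
      dSR 𝒞 ≤ dMC 𝒞 ∧
      ((∃ (j : Fin ℓ) (δ : ℕ), δ ≤ n j - 1 ∧
          dSR 𝒞 - 1 = (∑ i ∈ Finset.Iio j, n i) + δ ∧
          𝒞.ncard = (Fintype.card F) ^ ((∑ i ∈ Finset.Ici j, m i * n i) - m j * δ)) →
        IsMMCD 𝒞)) := by
  classical
  have part1 : ∀ C : MCSpace F m n, wtSR C ≤ wtMC C := by
    intro C
    obtain ⟨X, Y, hcov, hsize⟩ := wtMC_exists C
    calc wtSR C ≤ mcSize X Y := wtSR_le_mcSize hcov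
      _ = wtMC C := hsize
  refine ⟨part1, ?_⟩
  intro 𝒞 h2
  have hfin : 𝒞.Finite := Set.toFinite 𝒞
  obtain ⟨C0, D0, hC0, hD0, hCD0⟩ := (Set.one_lt_ncard_iff hfin).1 h2
  have hMCne : {r | ∃ C ∈ 𝒞, ∃ D ∈ 𝒞, C ≠ D ∧ wtMC (C - D) = r}.Nonempty :=
    ⟨wtMC (C0 - D0), C0, hC0, D0, hD0, hCD0, rfl⟩
  obtain ⟨C1, hC1, D1, hD1, hne1, hw1⟩ := Nat.sInf_mem hMCne
  replace hw1 : wtMC (C1 - D1) = dMC 𝒞 := hw1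
  have hdSRle : dSR 𝒞 ≤ dMC 𝒞 := by
    have h1 : dSR 𝒞 ≤ wtSR (C1 - D1) := Nat.sInf_le ⟨C1, hC1, D1, hD1, hne1, rfl⟩
    calc dSR 𝒞 ≤ wtSR (C1 - D1) := h1
      _ ≤ wtMC (C1 - D1) := part1 _
      _ = dMC 𝒞 := hw1
  refine ⟨hdSRle, ?_⟩
  rintro ⟨j, δ, hδ, hd, hcard⟩
  have hq : 1 < Fintype.card F := Fintype.one_lt_card
  have hdMC1 : 1 ≤ dMC 𝒞 := by
    rcases Nat.eq_zero_or_pos (dMC 𝒞) with h0 | h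
    · exfalso
      rw [h0] at hw1
      exact hne1 (sub_eq_zero.1 (wtMC_eq_zero hw1))
    · exact h
  have hdMCle : dMC 𝒞 ≤ ∑ i, n i := by
    have h1 : dMC 𝒞 ≤ wtMC (C1 - D1) := le_of_eq hw1.symm
    refine h1.trans ?_
    have h2 := wtMC_le (X := fun _ => (∅ : Finset (Fin (m _)))) (Y := fun i => univ)
      (C := C1 - D1) (fun _ a b _ => Or.inr (mem_univ b))
    simpa [mcSize, card_univ] using h2
  have ht : dMC 𝒞 - 1 < ∑ i, n i := by omega
  obtain ⟨j', δ', hδ', hdec⟩ := decompose' n _ ht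
  -- the removed columns
  set Yr : (i : Fin ℓ) → Finset (Fin (n i)) :=
    fun i => univ.filter (fun b => i < j' ∨ (i = j' ∧ (b : ℕ) < δ')) with hYr
  have hYrcard : ∀ i, (Yr i).card = if i < j' then n i else if i = j' then δ' else 0 := by
    intro i
    rcases lt_trichotomy i j' with hlt | heq | hgt
    · have hset : Yr i = univ := by
        simp only [hYr]
        exact Finset.filter_true_of_mem (fun b _ => Or.inl hlt)
      rw [if_pos hlt, hset, card_univ, Fintype.card_fin]
    · subst heq
      have hset : Yr i = univ.filter (fun b : Fin (n i) => (b : ℕ) < δ') := by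
        simp only [hYr]
        apply Finset.filter_congr
        intro b _
        simp [lt_irrefl]
      rw [if_neg (lt_irrefl i), if_pos rfl, hset, filter_val_lt_card _ _ hδ'.le]
    · have hset : Yr i = ∅ := by
        simp only [hYr]
        apply Finset.filter_false_of_mem
        intro b _
        push_neg
        exact ⟨hgt.le, fun h => absurd h hgt.ne'⟩
      rw [if_neg (not_lt.2 hgt.le), if_neg hgt.ne', hset, Finset.card_empty]
  have hsizeYr : ∑ i, (Yr i).card = dMC 𝒞 - 1 := by
    rw [hdec]
    rw [← Finset.sum_filter_add_sum_filter_not univ (fun i => i < j') (fun i => (Yr i).card),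
      univ_filter_lt, univ_filter_not_lt]
    congr 1
    · apply Finset.sum_congr rfl
      intro i hi
      rw [mem_Iio] at hi
      rw [hYrcard, if_pos hi]
    · calc ∑ i ∈ Ici j', (Yr i).card
          = ∑ i ∈ Ici j', (if i = j' then δ' else 0) := by
            apply Finset.sum_congr rfl
            intro i hi
            rw [mem_Ici] at hi
            rw [hYrcard, if_neg (not_lt.2 hi)]
        _ = δ' := by rw [Finset.sum_ite_eq' (Ici j') j' (fun _ => δ'), if_pos (mem_Ici.2 le_rfl)]
  -- the projection and injectivity
  set ψ : MCSpace F m n → ((i : Fin ℓ) → Fin (m i) → {b : Fin (n i) // b ∉ Yr i} → F) :=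
    fun C i a b => C i a b.1 with hψ
  have hinj : Set.InjOn ψ 𝒞 := by
    intro C hC D hD hpsi
    by_contra hne
    have hcov : IsMultiCover (fun _ => ∅) Yr (C - D) := by
      intro i a b hb
      right
      by_contra hbY
      apply hb
      have := congrFun (congrFun (congrFun hpsi i) a) ⟨b, hbY⟩
      show C i a b - D i a b = 0
      rw [sub_eq_zero]
      exact this
    have h1 : dMC 𝒞 ≤ wtMC (C - D) := Nat.sInf_le ⟨C, hC, D, hD, hne, rfl⟩
    have h2 : wtMC (C - D) ≤ mcSize (fun _ => ∅) Yr := wtMC_le hcov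
    have h3 : mcSize (m := m) (fun _ => ∅) Yr = dMC 𝒞 - 1 := by
      rw [mcSize]
      simpa using hsizeYr
    omega
  have hcount : 𝒞.ncard ≤ (Fintype.card F) ^ (∑ i, m i * (n i - (Yr i).card)) := by
    rw [← Set.ncard_image_of_injOn hinj]
    have h2 : (ψ '' 𝒞).ncard ≤ (Set.univ :
        Set ((i : Fin ℓ) → Fin (m i) → {b : Fin (n i) // b ∉ Yr i} → F)).ncard :=
      Set.ncard_le_ncard (Set.subset_univ _) Set.finite_univ
    rwa [Set.ncard_univ, Nat.card_eq_fintype_card, card_target m n F Yr] at h2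
  -- exponent computation
  have hδj : δ < n j := by have := hn j; omega
  have hE'exp : ∑ i, m i * (n i - (Yr i).card) = (∑ i ∈ Ici j', m i * n i) - m j' * δ' := by
    rw [← Finset.sum_filter_add_sum_filter_not univ (fun i => i < j')
      (fun i => m i * (n i - (Yr i).card)), univ_filter_lt, univ_filter_not_lt]
    have hz : ∑ i ∈ Iio j', m i * (n i - (Yr i).card) = 0 := by
      apply Finset.sum_eq_zero
      intro i hi
      rw [mem_Iio] at hi
      rw [hYrcard, if_pos hi, Nat.sub_self, Nat.mul_zero]
    rw [hz, Nat.zero_add]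
    rw [sum_Ici_eq j' (fun i => m i * (n i - (Yr i).card)),
      sum_Ici_eq j' (fun i => m i * n i)]
    have hrest : ∑ i ∈ Ioi j', m i * (n i - (Yr i).card) = ∑ i ∈ Ioi j', m i * n i := by
      apply Finset.sum_congr rfl
      intro i hi
      rw [mem_Ioi] at hi
      rw [hYrcard, if_neg (not_lt.2 hi.le), if_neg hi.ne', Nat.sub_zero]
    rw [hrest, hYrcard, if_neg (lt_irrefl j'), if_pos rfl, Nat.mul_sub]
    have h3 : m j' * δ' ≤ m j' * n j' := Nat.mul_le_mul_left _ hδ'.le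
    omega
  have hcount' : 𝒞.ncard ≤ (Fintype.card F) ^ ((∑ i ∈ Ici j', m i * n i) - m j' * δ') := by
    rwa [hE'exp] at hcount
  have hle1 : (∑ i ∈ Ici j, m i * n i) - m j * δ
      ≤ (∑ i ∈ Ici j', m i * n i) - m j' * δ' := by
    rw [hcard] at hcount'
    exact (Nat.pow_le_pow_iff_right hq).1 hcount'
  have hle2 : (∑ i ∈ Ici j', m i * n i) - m j' * δ'
      ≤ (∑ i ∈ Ici j, m i * n i) - m j * δ := by
    apply exponent_mono m n j j' δ δ' hδj hδ'
    have hsub := Nat.sub_le_sub_right hdSRle 1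
    rw [hd, hdec] at hsub
    exact hsub
  refine ⟨j', δ', by omega, hdec, ?_⟩
  rw [hcard]
  congr 1
  omega
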